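/- Under losses in [0,1] and budget assumption (B_i ≥ c_k + c_j for all k,j), each client i running OFMS-FT with FFD clustering satisfies R_{i,T} ≤ (ln K)/η_i + η_i·μ_i·T, where R_{i,T} is the expected regret against the best fixed model in hindsight. -/

import Mathlib

/-!
The client runs exponential weights on the importance-weighted loss estimates
`ℓ̂ j = χ j * L j / q j`. The usual potential argument (with `exp (-x) ≤ 1 - x + x ^ 2 / 2` for
`x ≥ 0`) gives, on every sample path, regret against the estimates at most
`log K / η + η / 2 * ∑ₜ ∑ⱼ pⱼ ℓ̂ⱼ²`. Since `q j` is the conditional probability of storing model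
`j`, the estimates are conditionally unbiased, and since `χ ^ 2 = χ` the conditional second moment
is `∑ⱼ pⱼ Lⱼ² / qⱼ`. The FFD bound `m ≤ 2 μ` gives `q j ≥ ∑ᵢ pᵢ / (2 μ) = 1 / (2 μ)`, so this second
moment is at most `2 μ`, and taking expectations yields `log K / η + η μ T`.
-/

open MeasureTheory Finset Real

lemma Real.exp_neg_le_one_sub_add_sq_div_two {x : ℝ} (hx : 0 ≤ x) :
    exp (-x) ≤ 1 - x + x ^ 2 / 2 := by
  let f : ℝ → ℝ := fun y => 1 - y + y ^ 2 / 2 - exp (-y)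
  have hf : ∀ y, HasDerivAt f (-1 + y + exp (-y)) y := fun y => by
    refine ((((hasDerivAt_id y).const_sub 1).add ((hasDerivAt_pow 2 y).div_const 2)).sub
      (hasDerivAt_neg y).exp).congr_deriv ?_
    simp
  have hmono : MonotoneOn f (Set.Ici 0) :=
    monotoneOn_of_deriv_nonneg (convex_Ici 0) (by fun_prop)
      (fun y _ => (hf y).differentiableAt.differentiableWithinAt)
      (fun y _ => by rw [(hf y).deriv]; linarith [add_one_le_exp (-y)])
  have := hmono Set.self_mem_Ici hx hx
  simp only [f, neg_zero, exp_zero] at this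
  linarith

section Hedge

variable {ι : Type*} [Fintype ι] {η : ℝ}

lemma hedge_weight_pos {w ℓ : ℕ → ℝ} (hw1 : 0 < w 1) (hrec : ∀ t, w (t + 1) = w t * exp (-η * ℓ t))
    {t : ℕ} (ht : 1 ≤ t) : 0 < w t := by
  induction t, ht using Nat.le_induction with
  | base => exact hw1
  | succ t _ ih => rw [hrec]; positivity

lemma hedge_weight_eq {w ℓ : ℕ → ℝ} (hrec : ∀ t, w (t + 1) = w t * exp (-η * ℓ t)) (T : ℕ) :
    w (T + 1) = w 1 * exp (-η * ∑ t ∈ Icc 1 T, ℓ t) := by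
  induction T with
  | zero => simp
  | succ T ih =>
    rw [hrec, ih, sum_Icc_succ_top (by omega), mul_add, exp_add, mul_assoc]

lemma measurable_hedge_weight {Ω : Type*} {ℱ : ℕ → MeasurableSpace Ω} (hℱ : Monotone ℱ)
    {w ℓ : ℕ → Ω → ℝ} (hw1 : Measurable[ℱ 1] (w 1))
    (hℓ : ∀ t, Measurable[ℱ (t + 1)] (ℓ t))
    (hrec : ∀ t ω, w (t + 1) ω = w t ω * exp (-η * ℓ t ω)) {t : ℕ} (ht : 1 ≤ t) :
    Measurable[ℱ t] (w t) := by
  induction t, ht using Nat.le_induction with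
  | base => exact hw1
  | succ t _ ih =>
    rw [show w (t + 1) = fun ω => w t ω * exp (-η * ℓ t ω) from funext (hrec t)]
    exact (ih.mono (hℱ t.le_succ) le_rfl).mul ((hℓ t).const_mul (-η)).exp

lemma hedge_mem_stdSimplex [Nonempty ι] {w p ℓ : ι → ℕ → ℝ} (hw1 : ∀ j, 0 < w j 1)
    (hrec : ∀ j t, w j (t + 1) = w j t * exp (-η * ℓ j t))
    (hp : ∀ j t, p j t = w j t / ∑ i, w i t) {t : ℕ} (ht : 1 ≤ t) :
    (fun j => p j t) ∈ stdSimplex ℝ ι := by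
  have hw : ∀ j, 0 < w j t := fun j => hedge_weight_pos (hw1 j) (hrec j) ht
  have hS : 0 < ∑ i, w i t := sum_pos (fun j _ => hw j) univ_nonempty
  refine ⟨fun j => ?_, ?_⟩
  · dsimp only; rw [hp]; exact (div_pos (hw j) hS).le
  · simp only [hp, ← sum_div]; exact div_self hS.ne'

lemma log_sum_mul_exp_neg_le {p ℓ : ι → ℝ} (hp : p ∈ stdSimplex ℝ ι) (hℓ : ∀ j, 0 ≤ ℓ j)
    (hη : 0 ≤ η) :
    log (∑ j, p j * exp (-η * ℓ j)) ≤
      -η * ∑ j, p j * ℓ j + η ^ 2 / 2 * ∑ j, p j * ℓ j ^ 2 := by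
  obtain ⟨i, -, hi⟩ := exists_ne_zero_of_sum_ne_zero (hp.2.symm ▸ one_ne_zero : ∑ j, p j ≠ 0)
  have hpos : 0 < ∑ j, p j * exp (-η * ℓ j) :=
    sum_pos' (fun j _ => by have := hp.1 j; positivity)
      ⟨i, mem_univ i, mul_pos ((hp.1 i).lt_of_ne' hi) (exp_pos _)⟩
  calc log (∑ j, p j * exp (-η * ℓ j))
      ≤ ∑ j, p j * exp (-η * ℓ j) - 1 := log_le_sub_one_of_pos hpos
    _ ≤ ∑ j, p j * (1 - η * ℓ j + (η * ℓ j) ^ 2 / 2) - ∑ j, p j := by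
        rw [hp.2]
        gcongr with j
        · exact hp.1 j
        · rw [neg_mul]; exact exp_neg_le_one_sub_add_sq_div_two (mul_nonneg hη (hℓ j))
    _ = -η * ∑ j, p j * ℓ j + η ^ 2 / 2 * ∑ j, p j * ℓ j ^ 2 := by
        rw [mul_sum, mul_sum, ← sum_add_distrib, ← sum_sub_distrib]
        exact sum_congr rfl fun j _ => by ring

theorem hedge_regret_le [Nonempty ι] (hη : 0 < η) {w p ℓ : ι → ℕ → ℝ}
    (hℓ : ∀ j t, 1 ≤ t → 0 ≤ ℓ j t) (hw1 : ∀ j, w j 1 = 1)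
    (hrec : ∀ j t, w j (t + 1) = w j t * exp (-η * ℓ j t))
    (hp : ∀ j t, p j t = w j t / ∑ i, w i t) (k : ι) (T : ℕ) :
    ∑ t ∈ Icc 1 T, ∑ j, p j t * ℓ j t ≤
      ∑ t ∈ Icc 1 T, ℓ k t + log (Fintype.card ι) / η +
        η / 2 * ∑ t ∈ Icc 1 T, ∑ j, p j t * ℓ j t ^ 2 := by
  have hw1_pos : ∀ j, 0 < w j 1 := fun j => (hw1 j).symm ▸ one_pos
  have hS : ∀ t, 1 ≤ t → 0 < ∑ j, w j t := fun t ht =>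
    sum_pos (fun j _ => hedge_weight_pos (hw1_pos j) (hrec j) ht) univ_nonempty
  let Φ : ℕ → ℝ := fun t => log (∑ j, w j t)
  have hstep : ∀ t ∈ Icc 1 T, Φ (t + 1) - Φ t ≤
      -η * ∑ j, p j t * ℓ j t + η ^ 2 / 2 * ∑ j, p j t * ℓ j t ^ 2 := by
    intro t ht
    have ht : 1 ≤ t := (mem_Icc.1 ht).1
    have hratio : (∑ j, w j (t + 1)) / ∑ j, w j t = ∑ j, p j t * exp (-η * ℓ j t) := by
      simp only [hrec, hp, sum_div]
      exact sum_congr rfl fun j _ => by ring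
    rw [← log_div (hS _ (by omega)).ne' (hS t ht).ne', hratio]
    exact log_sum_mul_exp_neg_le (hedge_mem_stdSimplex hw1_pos hrec hp ht)
      (fun j => hℓ j t ht) hη.le
  have htelescope : Φ (T + 1) - Φ 1 = ∑ t ∈ Icc 1 T, (Φ (t + 1) - Φ t) := by
    rw [← Finset.Ico_add_one_right_eq_Icc, sum_Ico_sub Φ (by omega)]
  have hΦ1 : Φ 1 = log (Fintype.card ι) := by simp [Φ, hw1]
  have hΦk : -η * ∑ t ∈ Icc 1 T, ℓ k t ≤ Φ (T + 1) := by
    have hk := log_le_log (hedge_weight_pos (hw1_pos k) (hrec k) (by omega : 1 ≤ T + 1))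
      (single_le_sum (fun j _ => (hedge_weight_pos (hw1_pos j) (hrec j) (by omega)).le)
        (mem_univ k))
    rwa [hedge_weight_eq (hrec k), hw1, one_mul, log_exp] at hk
  have hsum := sum_le_sum hstep
  rw [← htelescope, sum_add_distrib, ← mul_sum, ← mul_sum, hΦ1] at hsum
  rw [← mul_le_mul_iff_right₀ hη]
  have : η * (∑ t ∈ Icc 1 T, ℓ k t + log (Fintype.card ι) / η +
      η / 2 * ∑ t ∈ Icc 1 T, ∑ j, p j t * ℓ j t ^ 2) =
      η * ∑ t ∈ Icc 1 T, ℓ k t + log (Fintype.card ι) +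
        η ^ 2 / 2 * ∑ t ∈ Icc 1 T, ∑ j, p j t * ℓ j t ^ 2 := by
    field_simp
  linarith

end Hedge

section ExpectedHedge

variable {Ω ι : Type*} [Fintype ι] [Nonempty ι] [MeasurableSpace Ω] {μ : Measure Ω}
  [IsProbabilityMeasure μ] {η : ℝ}

theorem integral_hedge_regret_le (hη : 0 < η) {w p ℓ L : ι → ℕ → Ω → ℝ} {V : ℝ} (k : ι) (T : ℕ)
    (hℓ : ∀ j t, 1 ≤ t → ∀ ω, 0 ≤ ℓ j t ω) (hw1 : ∀ j ω, w j 1 ω = 1)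
    (hrec : ∀ j t ω, w j (t + 1) ω = w j t ω * exp (-η * ℓ j t ω))
    (hp : ∀ j t ω, p j t ω = w j t ω / ∑ i, w i t ω)
    (hint : ∀ t, 1 ≤ t → Integrable (ℓ k t) μ)
    (hint_mean : ∀ t, 1 ≤ t → Integrable (fun ω => ∑ j, p j t ω * ℓ j t ω) μ)
    (hint_sq : ∀ t, 1 ≤ t → Integrable (fun ω => ∑ j, p j t ω * ℓ j t ω ^ 2) μ)
    (hunbiased : ∀ t, 1 ≤ t → ∫ ω, ℓ k t ω ∂μ = ∫ ω, L k t ω ∂μ)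
    (hunbiased_mean : ∀ t, 1 ≤ t →
      ∫ ω, ∑ j, p j t ω * ℓ j t ω ∂μ = ∫ ω, ∑ j, p j t ω * L j t ω ∂μ)
    (hsq : ∀ t, 1 ≤ t → ∫ ω, ∑ j, p j t ω * ℓ j t ω ^ 2 ∂μ ≤ V) :
    ∑ t ∈ Icc 1 T, ∫ ω, ∑ j, p j t ω * L j t ω ∂μ - ∑ t ∈ Icc 1 T, ∫ ω, L k t ω ∂μ ≤
      log (Fintype.card ι) / η + η / 2 * (T * V) := by
  have hpointwise := fun ω => hedge_regret_le hη (fun j t ht => hℓ j t ht ω) (fun j => hw1 j ω)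
    (fun j t => hrec j t ω) (fun j t => hp j t ω) k T
  have hsum_int {f : ℕ → Ω → ℝ} (hf : ∀ t, 1 ≤ t → Integrable (f t) μ) :
      ∀ t ∈ Icc 1 T, Integrable (f t) μ := fun t ht => hf t (mem_Icc.1 ht).1
  have hℓk := integrable_finsetSum _ (hsum_int hint)
  have hsq_sum := integrable_finsetSum _ (hsum_int hint_sq)
  have hℓk_add : Integrable (fun ω => ∑ t ∈ Icc 1 T, ℓ k t ω + log (Fintype.card ι) / η) μ :=
    hℓk.add (integrable_const _)
  have hV : ∑ t ∈ Icc 1 T, ∫ ω, ∑ j, p j t ω * ℓ j t ω ^ 2 ∂μ ≤ T * V := by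
    simpa using sum_le_card_nsmul _ _ V fun t ht => hsq t (mem_Icc.1 ht).1
  calc ∑ t ∈ Icc 1 T, ∫ ω, ∑ j, p j t ω * L j t ω ∂μ - ∑ t ∈ Icc 1 T, ∫ ω, L k t ω ∂μ
      = ∫ ω, ∑ t ∈ Icc 1 T, ∑ j, p j t ω * ℓ j t ω ∂μ - ∑ t ∈ Icc 1 T, ∫ ω, ℓ k t ω ∂μ := by
        rw [integral_finsetSum _ (hsum_int hint_mean),
          sum_congr rfl fun t ht => hunbiased_mean t (mem_Icc.1 ht).1,
          sum_congr rfl fun t ht => hunbiased t (mem_Icc.1 ht).1]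
    _ ≤ ∫ ω, (∑ t ∈ Icc 1 T, ℓ k t ω + log (Fintype.card ι) / η +
          η / 2 * ∑ t ∈ Icc 1 T, ∑ j, p j t ω * ℓ j t ω ^ 2) ∂μ -
          ∑ t ∈ Icc 1 T, ∫ ω, ℓ k t ω ∂μ :=
        sub_le_sub_right (integral_mono (integrable_finsetSum _ (hsum_int hint_mean))
          (hℓk_add.add (hsq_sum.const_mul _)) hpointwise) _
    _ = log (Fintype.card ι) / η + η / 2 * ∑ t ∈ Icc 1 T, ∫ ω, ∑ j, p j t ω * ℓ j t ω ^ 2 ∂μ := by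
        rw [integral_add hℓk_add (hsq_sum.const_mul _),
          integral_add hℓk (integrable_const _), integral_const_mul, integral_const,
          integral_finsetSum _ (hsum_int hint), integral_finsetSum _ (hsum_int hint_sq)]
        simp only [probReal_univ, smul_eq_mul, one_mul]
        ring
    _ ≤ log (Fintype.card ι) / η + η / 2 * (T * V) := by gcongr

end ExpectedHedge

lemma div_le_mul_of_inv_le {x y b c : ℝ} (hc : 0 < c) (hx : 0 ≤ x) (hxb : x ≤ b) (hy : c⁻¹ ≤ y) :
    x / y ≤ b * c :=
  mul_le_mul hxb (inv_le_of_inv_le₀ hc hy) (inv_nonneg.2 ((inv_pos.2 hc).le.trans hy))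
    (hx.trans hxb)

lemma inv_le_add_sum_erase_div {ι : Type*} [Fintype ι] [DecidableEq ι] {p m : ι → ℝ} {c : ℝ}
    (hp : p ∈ stdSimplex ℝ ι) (hc : 1 ≤ c) (hm : ∀ j, 0 < m j) (hmc : ∀ j, m j ≤ c) (k : ι) :
    c⁻¹ ≤ p k + ∑ j ∈ univ.erase k, p j / m j :=
  calc c⁻¹ = p k / c + ∑ j ∈ univ.erase k, p j / c := by
        rw [← sum_div, ← add_div, add_sum_erase _ _ (mem_univ k), hp.2, one_div]
    _ ≤ p k + ∑ j ∈ univ.erase k, p j / m j := by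
        gcongr with j
        · exact div_le_self (hp.1 k) hc
        · exact hp.1 j
        · exact hm j
        · exact hmc j

section ImportanceWeighting

variable {Ω : Type*} {m : MeasurableSpace Ω} [mΩ : MeasurableSpace Ω] {μ : Measure Ω}

lemma integral_mul_eq_of_condExp_eq [IsFiniteMeasure μ] (hm : m ≤ mΩ) {χ q g : Ω → ℝ}
    (hχ : Integrable χ μ) (hχq : μ[χ|m] =ᵐ[μ] q) (hg : Measurable[m] g) {C : ℝ}
    (hgC : ∀ ω, |g ω| ≤ C) :
    ∫ ω, g ω * χ ω ∂μ = ∫ ω, g ω * q ω ∂μ :=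
  calc ∫ ω, g ω * χ ω ∂μ = ∫ ω, μ[g * χ|m] ω ∂μ := (integral_condExp hm).symm
    _ = ∫ ω, g ω * q ω ∂μ := integral_congr_ae <| by
        filter_upwards [condExp_stronglyMeasurable_mul_of_bound hm hg.stronglyMeasurable hχ C
          (ae_of_all _ hgC), hχq] with ω h hq
        rw [h, Pi.mul_apply, hq]

lemma integral_mul_div_eq_of_condExp_eq [IsFiniteMeasure μ] (hm : m ≤ mΩ) {χ q g : Ω → ℝ}
    (hχ : Integrable χ μ) (hχq : μ[χ|m] =ᵐ[μ] q) (hg : Measurable[m] g) (hqm : Measurable[m] q)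
    {a C : ℝ} (ha : 0 < a) (hq : ∀ ω, a ≤ q ω) (hgC : ∀ ω, |g ω| ≤ C) :
    ∫ ω, χ ω * g ω / q ω ∂μ = ∫ ω, g ω ∂μ := by
  have hq0 : ∀ ω, 0 < q ω := fun ω => ha.trans_le (hq ω)
  calc ∫ ω, χ ω * g ω / q ω ∂μ = ∫ ω, g ω / q ω * χ ω ∂μ := by
        congr 1 with ω; ring
    _ = ∫ ω, g ω / q ω * q ω ∂μ := integral_mul_eq_of_condExp_eq hm hχ hχq (hg.div hqm)
        (C := C / a) fun ω => by
          rw [abs_div, abs_of_pos (hq0 ω)]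
          exact div_le_div₀ ((abs_nonneg _).trans (hgC ω)) (hgC ω) ha (hq ω)
    _ = ∫ ω, g ω ∂μ := by
        congr 1 with ω; exact div_mul_cancel₀ _ (hq0 ω).ne'

variable {ι : Type*} [Fintype ι]

lemma mem_Icc_mul {a b x y : ℝ} (hx : x ∈ Set.Icc 0 a) (hy : y ∈ Set.Icc 0 b) :
    x * y ∈ Set.Icc 0 (a * b) :=
  ⟨mul_nonneg hx.1 hy.1, mul_le_mul hx.2 hy.2 hy.1 (hx.1.trans hx.2)⟩

lemma integrable_of_mem_Icc [IsFiniteMeasure μ] {f : Ω → ℝ} (hf : Measurable f) {C : ℝ}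
    (hC : ∀ ω, f ω ∈ Set.Icc 0 C) :
    Integrable f μ :=
  .of_bound hf.aestronglyMeasurable C <| ae_of_all _ fun ω => by
    rw [Real.norm_of_nonneg (hC ω).1]; exact (hC ω).2

/-- `m` is the information available before the round; the loss `L j` is estimated by
`χ j * L j / q j`. -/
structure IsImportanceWeightedRound (μ : Measure Ω) (m : MeasurableSpace Ω) (c : ℝ)
    (p L q χ : ι → Ω → ℝ) : Prop where
  le : m ≤ mΩ
  pos : 0 < c
  mem_stdSimplex : ∀ ω, (fun j => p j ω) ∈ stdSimplex ℝ ι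
  measurable_p : ∀ j, Measurable[m] (p j)
  mem_Icc : ∀ j ω, L j ω ∈ Set.Icc 0 1
  measurable_L : ∀ j, Measurable[m] (L j)
  inv_le_q : ∀ j ω, c⁻¹ ≤ q j ω
  measurable_q : ∀ j, Measurable[m] (q j)
  zero_or_one : ∀ j ω, χ j ω = 0 ∨ χ j ω = 1
  measurable_χ : ∀ j, Measurable[mΩ] (χ j)
  condExp_χ : ∀ j, μ[χ j|m] =ᵐ[μ] q j

namespace IsImportanceWeightedRound

variable {c : ℝ} {p L q χ : ι → Ω → ℝ}

lemma q_pos (h : IsImportanceWeightedRound μ m c p L q χ) (j : ι) (ω : Ω) : 0 < q j ω :=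
  (inv_pos.2 h.pos).trans_le (h.inv_le_q j ω)

lemma div_q_mem_Icc (h : IsImportanceWeightedRound μ m c p L q χ) {x b : ℝ} (j : ι) (ω : Ω)
    (hx : x ∈ Set.Icc 0 b) : x / q j ω ∈ Set.Icc 0 (b * c) :=
  ⟨div_nonneg hx.1 (h.q_pos j ω).le, div_le_mul_of_inv_le h.pos hx.1 hx.2 (h.inv_le_q j ω)⟩

lemma mem_Icc_p (h : IsImportanceWeightedRound μ m c p L q χ) (j : ι) (ω : Ω) :
    p j ω ∈ Set.Icc 0 1 :=
  mem_Icc_of_mem_stdSimplex (h.mem_stdSimplex ω) j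

lemma indicator_mul_mem_Icc (h : IsImportanceWeightedRound μ m c p L q χ) (j : ι) (ω : Ω) :
    χ j ω * L j ω ∈ Set.Icc 0 1 := by
  rcases h.zero_or_one j ω with h0 | h1
  · simp [h0]
  · simpa [h1] using h.mem_Icc j ω

lemma estimate_mem_Icc (h : IsImportanceWeightedRound μ m c p L q χ) (j : ι) (ω : Ω) :
    χ j ω * L j ω / q j ω ∈ Set.Icc 0 c := by
  simpa using h.div_q_mem_Icc j ω (h.indicator_mul_mem_Icc j ω)

lemma measurable_estimate (h : IsImportanceWeightedRound μ m c p L q χ) (j : ι) :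
    Measurable fun ω => χ j ω * L j ω / q j ω :=
  ((h.measurable_χ j).mul ((h.measurable_L j).mono h.le le_rfl)).div
    ((h.measurable_q j).mono h.le le_rfl)

variable [IsFiniteMeasure μ]

lemma integrable_estimate (h : IsImportanceWeightedRound μ m c p L q χ) (j : ι) :
    Integrable (fun ω => χ j ω * L j ω / q j ω) μ :=
  integrable_of_mem_Icc (h.measurable_estimate j) (h.estimate_mem_Icc j)

lemma integrable_mul_estimate (h : IsImportanceWeightedRound μ m c p L q χ) (j : ι) :
    Integrable (fun ω => p j ω * (χ j ω * L j ω / q j ω)) μ :=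
  integrable_of_mem_Icc (((h.measurable_p j).mono h.le le_rfl).mul (h.measurable_estimate j))
    fun ω => mem_Icc_mul (h.mem_Icc_p j ω) (h.estimate_mem_Icc j ω)

lemma integrable_mul_estimate_sq (h : IsImportanceWeightedRound μ m c p L q χ) (j : ι) :
    Integrable (fun ω => p j ω * (χ j ω * L j ω / q j ω) ^ 2) μ :=
  integrable_of_mem_Icc
    (((h.measurable_p j).mono h.le le_rfl).mul ((h.measurable_estimate j).pow_const 2))
    fun ω => by
      simpa only [sq] using mem_Icc_mul (h.mem_Icc_p j ω)
        (mem_Icc_mul (h.estimate_mem_Icc j ω) (h.estimate_mem_Icc j ω))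

lemma integral_indicator_mul_div (h : IsImportanceWeightedRound μ m c p L q χ) (j : ι)
    {g : Ω → ℝ} (hg : Measurable[m] g) {C : ℝ} (hgC : ∀ ω, g ω ∈ Set.Icc 0 C) :
    ∫ ω, χ j ω * g ω / q j ω ∂μ = ∫ ω, g ω ∂μ :=
  integral_mul_div_eq_of_condExp_eq h.le
    (integrable_of_mem_Icc (C := 1) (h.measurable_χ j) fun ω => by
      rcases h.zero_or_one j ω with h' | h' <;> simp [h'])
    (h.condExp_χ j) hg (h.measurable_q j) (inv_pos.2 h.pos) (h.inv_le_q j)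
    fun ω => abs_le.2 ⟨by linarith [(hgC ω).1, (hgC ω).2], (hgC ω).2⟩

lemma integral_estimate (h : IsImportanceWeightedRound μ m c p L q χ) (j : ι) :
    ∫ ω, χ j ω * L j ω / q j ω ∂μ = ∫ ω, L j ω ∂μ :=
  h.integral_indicator_mul_div j (h.measurable_L j) (h.mem_Icc j)

lemma integral_sum_mul_estimate (h : IsImportanceWeightedRound μ m c p L q χ) :
    ∫ ω, ∑ j, p j ω * (χ j ω * L j ω / q j ω) ∂μ = ∫ ω, ∑ j, p j ω * L j ω ∂μ := by
  have hpL : ∀ j ω, p j ω * L j ω ∈ Set.Icc 0 1 := fun j ω => by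
    simpa only [mul_one] using mem_Icc_mul (h.mem_Icc_p j ω) (h.mem_Icc j ω)
  have hmeas : ∀ j, Measurable[m] fun ω => p j ω * L j ω := fun j =>
    (h.measurable_p j).mul (h.measurable_L j)
  rw [integral_finsetSum _ fun j _ => h.integrable_mul_estimate j,
    integral_finsetSum _ fun j _ => integrable_of_mem_Icc ((hmeas j).mono h.le le_rfl) (hpL j)]
  refine sum_congr rfl fun j _ => ?_
  rw [← h.integral_indicator_mul_div j (hmeas j) (hpL j)]
  congr 1 with ω; ring

lemma integral_sum_mul_estimate_sq_le [IsProbabilityMeasure μ]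
    (h : IsImportanceWeightedRound μ m c p L q χ) :
    ∫ ω, ∑ j, p j ω * (χ j ω * L j ω / q j ω) ^ 2 ∂μ ≤ c := by
  have hL2 : ∀ j ω, L j ω ^ 2 ∈ Set.Icc 0 1 := fun j ω => by
    simpa only [sq, mul_one] using mem_Icc_mul (h.mem_Icc j ω) (h.mem_Icc j ω)
  have hpL2 : ∀ j ω, p j ω * L j ω ^ 2 / q j ω ∈ Set.Icc 0 (1 * 1 * c) := fun j ω =>
    h.div_q_mem_Icc j ω (mem_Icc_mul (h.mem_Icc_p j ω) (hL2 j ω))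
  have hmeas : ∀ j, Measurable[m] fun ω => p j ω * L j ω ^ 2 / q j ω := fun j =>
    ((h.measurable_p j).mul ((h.measurable_L j).pow_const 2)).div (h.measurable_q j)
  calc ∫ ω, ∑ j, p j ω * (χ j ω * L j ω / q j ω) ^ 2 ∂μ
      = ∫ ω, ∑ j, p j ω * L j ω ^ 2 / q j ω ∂μ := by
        rw [integral_finsetSum _ fun j _ => h.integrable_mul_estimate_sq j,
          integral_finsetSum _ fun j _ =>
            integrable_of_mem_Icc ((hmeas j).mono h.le le_rfl) (hpL2 j)]
        refine sum_congr rfl fun j _ => ?_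
        rw [← h.integral_indicator_mul_div j (hmeas j) (hpL2 j)]
        congr 1 with ω
        rcases h.zero_or_one j ω with h' | h' <;> simp only [h'] <;> ring
    _ ≤ ∫ _, c ∂μ := by
        refine integral_mono_of_nonneg (ae_of_all _ fun ω => ?_) (integrable_const c)
          (ae_of_all _ fun ω => ?_)
        · exact sum_nonneg fun j _ => (hpL2 j ω).1
        · calc ∑ j, p j ω * L j ω ^ 2 / q j ω ≤ ∑ j, p j ω * c := sum_le_sum fun j _ => by
                rw [mul_div_assoc]
                gcongr
                · exact (h.mem_Icc_p j ω).1
                · simpa only [one_mul] using (h.div_q_mem_Icc j ω (hL2 j ω)).2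
            _ = c := by rw [← sum_mul, (h.mem_stdSimplex ω).2, one_mul]
    _ = c := by simp

end IsImportanceWeightedRound

end ImportanceWeighting

theorem stmt_16_general {Ω : Type*} [m0 : MeasurableSpace Ω]
    (μ : Measure Ω) [IsProbabilityMeasure μ]
    (K T : ℕ) (η : ℝ) (hη : 0 < η)
    (μcl : ℝ) (hμcl : 1 ≤ μcl)
    (ℱ : ℕ → MeasurableSpace Ω) (hℱ : ∀ t, ℱ t ≤ m0)
    (hℱmono : Monotone ℱ)
    -- realized losses 𝓛(f_k(x_{i,t};θ_{k,t}), y_{i,t}) ∈ [0,1], known at round t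
    (Lval : Fin K → ℕ → Ω → ℝ)
    (hLmeas : ∀ k t, StronglyMeasurable[ℱ t] (Lval k t))
    (hL0 : ∀ k t ω, 0 ≤ Lval k t ω) (hL1 : ∀ k t ω, Lval k t ω ≤ 1)
    -- numbers of clusters formed when model j is chosen, bounded via FFD by 2 μcl
    (m : Fin K → ℕ → Ω → ℝ)
    (hm1 : ∀ j t ω, 1 ≤ m j t ω) (hm2 : ∀ j t ω, m j t ω ≤ 2 * μcl)
    -- weights, sampling probabilities and storage probabilities
    (z p q : Fin K → ℕ → Ω → ℝ)
    (hz1 : ∀ k ω, z k 1 ω = 1)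
    (hp : ∀ k t ω, p k t ω = z k t ω / ∑ j, z j t ω)
    (hq : ∀ k t ω, q k t ω = p k t ω + ∑ j ∈ Finset.univ.erase k, p j t ω / m j t ω)
    (hqmeas : ∀ k t, StronglyMeasurable[ℱ t] (q k t))
    -- 0/1 indicator of the event {model k is stored by the client at round t}
    (χ : Fin K → ℕ → Ω → ℝ)
    (hχ : ∀ k t ω, χ k t ω = 0 ∨ χ k t ω = 1)
    (hχmeas : ∀ k t, StronglyMeasurable[ℱ (t + 1)] (χ k t))
    (hχmean : ∀ k t, μ[χ k t | ℱ t] =ᵐ[μ] q k t)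
    -- importance-sampled loss estimates and the multiplicative weights update
    (ℓhat : Fin K → ℕ → Ω → ℝ)
    (hℓhat : ∀ k t ω, ℓhat k t ω = χ k t ω * Lval k t ω / q k t ω)
    (hzrec : ∀ k t ω, z k (t + 1) ω = z k t ω * Real.exp (-η * ℓhat k t ω)) :
    ∀ k : Fin K,
      ∑ t ∈ Finset.Icc 1 T, (∫ ω, ∑ j, p j t ω * Lval j t ω ∂μ) -
          ∑ t ∈ Finset.Icc 1 T, (∫ ω, Lval k t ω ∂μ) ≤
        Real.log K / η + η * μcl * T := by
  intro k
  have : Nonempty (Fin K) := ⟨k⟩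
  obtain rfl : ℓhat = fun j t ω => χ j t ω * Lval j t ω / q j t ω := by
    funext j t ω; exact hℓhat j t ω
  have hLm (j t) : Measurable[ℱ (t + 1)] (Lval j t) :=
    (hLmeas j t).measurable.mono (hℱmono t.le_succ) le_rfl
  have hqm (j t) : Measurable[ℱ (t + 1)] (q j t) :=
    (hqmeas j t).measurable.mono (hℱmono t.le_succ) le_rfl
  have hzm (j : Fin K) {t : ℕ} (ht : 1 ≤ t) : Measurable[ℱ t] (z j t) :=
    measurable_hedge_weight hℱmono (funext (hz1 j) ▸ measurable_const)
      (fun t => ((hχmeas j t).measurable.mul (hLm j t)).div (hqm j t)) (hzrec j) ht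
  have hround (t : ℕ) (ht : 1 ≤ t) : IsImportanceWeightedRound μ (ℱ t) (2 * μcl)
      (p · t) (Lval · t) (q · t) (χ · t) := by
    have hsimplex (ω : Ω) : (fun j => p j t ω) ∈ stdSimplex ℝ (Fin K) :=
      hedge_mem_stdSimplex (w := fun j t => z j t ω) (fun j => by simp [hz1])
        (fun j t => hzrec j t ω) (fun j t => hp j t ω) ht
    exact
      { le := hℱ t
        pos := by linarith
        mem_stdSimplex := hsimplex
        measurable_p := fun j => funext (hp j t) ▸
          (hzm j ht).div (Finset.measurable_sum _ fun i _ => hzm i ht)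
        mem_Icc := fun j ω => ⟨hL0 j t ω, hL1 j t ω⟩
        measurable_L := fun j => (hLmeas j t).measurable
        inv_le_q := fun j ω => hq j t ω ▸ inv_le_add_sum_erase_div (hsimplex ω) (by linarith)
          (fun i => one_pos.trans_le (hm1 i t ω)) (fun i => hm2 i t ω) j
        measurable_q := fun j => (hqmeas j t).measurable
        zero_or_one := fun j => hχ j t
        measurable_χ := fun j => (hχmeas j t).measurable.mono (hℱ _) le_rfl
        condExp_χ := fun j => hχmean j t }
  calc _ ≤ Real.log (Fintype.card (Fin K)) / η + η / 2 * (T * (2 * μcl)) :=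
        integral_hedge_regret_le hη k T (fun j t ht ω => ((hround t ht).estimate_mem_Icc j ω).1)
          hz1 hzrec hp (fun t ht => (hround t ht).integrable_estimate k)
          (fun t ht => integrable_finsetSum _ fun j _ => (hround t ht).integrable_mul_estimate j)
          (fun t ht => integrable_finsetSum _ fun j _ => (hround t ht).integrable_mul_estimate_sq j)
          (fun t ht => (hround t ht).integral_estimate k)
          (fun t ht => (hround t ht).integral_sum_mul_estimate)
          (fun t ht => (hround t ht).integral_sum_mul_estimate_sq_le)
    _ = Real.log K / η + η * μcl * T := by rw [Fintype.card_fin]; ring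

/-- Client regret bound in OFMS-FT (Theorem 1, eq. (7)).  Client `i` keeps weights
`z` updated multiplicatively with importance-sampled loss estimates
`ℓ̂ k t = χ k t * Lval k t / q k t`, samples its model from `p k t = z k t / ∑ j z j t`,
and stores model `k` with probability `q k t = p k t + ∑_{j ≠ k} p j t / m j t`,
where the FFD clustering guarantee gives `m j t ≤ 2 μcl`.  Losses lie in `[0,1]`.
The expected regret against any fixed model `k` is at most `ln K / η + η μcl T`. -/
theorem stmt_16 {Ω : Type*} [m0 : MeasurableSpace Ω]
    (μ : Measure Ω) [IsProbabilityMeasure μ]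
    (K T : ℕ) (hK : 1 ≤ K) (η : ℝ) (hη : 0 < η)
    (μcl : ℝ) (hμcl : 1 ≤ μcl)
    (ℱ : ℕ → MeasurableSpace Ω) (hℱ : ∀ t, ℱ t ≤ m0)
    (hℱmono : Monotone ℱ)
    -- realized losses 𝓛(f_k(x_{i,t};θ_{k,t}), y_{i,t}) ∈ [0,1], known at round t
    (Lval : Fin K → ℕ → Ω → ℝ)
    (hLmeas : ∀ k t, StronglyMeasurable[ℱ t] (Lval k t))
    (hL0 : ∀ k t ω, 0 ≤ Lval k t ω) (hL1 : ∀ k t ω, Lval k t ω ≤ 1)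
    -- numbers of clusters formed when model j is chosen, bounded via FFD by 2 μcl
    (m : Fin K → ℕ → Ω → ℝ)
    (hm1 : ∀ j t ω, 1 ≤ m j t ω) (hm2 : ∀ j t ω, m j t ω ≤ 2 * μcl)
    -- weights, sampling probabilities and storage probabilities
    (z p q : Fin K → ℕ → Ω → ℝ)
    (hz1 : ∀ k ω, z k 1 ω = 1)
    (hp : ∀ k t ω, p k t ω = z k t ω / ∑ j, z j t ω)
    (hq : ∀ k t ω, q k t ω = p k t ω + ∑ j ∈ Finset.univ.erase k, p j t ω / m j t ω)
    (hqmeas : ∀ k t, StronglyMeasurable[ℱ t] (q k t))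
    -- 0/1 indicator of the event {model k is stored by the client at round t}
    (χ : Fin K → ℕ → Ω → ℝ)
    (hχ : ∀ k t ω, χ k t ω = 0 ∨ χ k t ω = 1)
    (hχmeas : ∀ k t, StronglyMeasurable[ℱ (t + 1)] (χ k t))
    (hχmean : ∀ k t, μ[χ k t | ℱ t] =ᵐ[μ] q k t)
    -- importance-sampled loss estimates and the multiplicative weights update
    (ℓhat : Fin K → ℕ → Ω → ℝ)
    (hℓhat : ∀ k t ω, ℓhat k t ω = χ k t ω * Lval k t ω / q k t ω)
    (hzrec : ∀ k t ω, z k (t + 1) ω = z k t ω * Real.exp (-η * ℓhat k t ω)) :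
    ∀ k : Fin K,
      ∑ t ∈ Finset.Icc 1 T, (∫ ω, ∑ j, p j t ω * Lval j t ω ∂μ) -
          ∑ t ∈ Finset.Icc 1 T, (∫ ω, Lval k t ω ∂μ) ≤
        Real.log K / η + η * μcl * T :=
  stmt_16_general (m0 := m0) μ K T η hη μcl hμcl ℱ hℱ hℱmono Lval hLmeas hL0 hL1 m hm1 hm2 z p q hz1
    hp hq hqmeas χ hχ hχmeas hχmean ℓhat hℓhat hzrec
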